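/- arXiv:2509.12206 — 2 statements merged into one kernel-verified Lean document; each statement's English description precedes it below -/
import Mathlib

section
/- Fix k ≥ 2, m ≥ 1 and ε ∈ (0,1/k]. Let X_1, X_2, … be i.i.d. real random variables with E[X_1⁴] < ∞. Then almost surely, sup over θ ∈ S_{m,ε} of | (1/n)·Σ_{i=1}^n log f_θ(X_i) − E[log f_θ(X_1)] | converges to 0 as n → ∞. -/
open MeasureTheory ProbabilityTheory Filter

/-- Gaussian density with mean `μ` and standard deviation `σ`. -/
noncomputable def gaussDensity (x μ σ : ℝ) : ℝ :=
  (Real.sqrt (2 * Real.pi))⁻¹ * σ⁻¹ * Real.exp (-(x - μ) ^ 2 / (2 * σ ^ 2))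

/-- Mixture parameter: weights, means, standard deviations. -/
abbrev MixParam (k : ℕ) := (Fin k → ℝ) × (Fin k → ℝ) × (Fin k → ℝ)

/-- `k`-component Gaussian mixture density. -/
noncomputable def mixDensity (k : ℕ) (θ : MixParam k) (x : ℝ) : ℝ :=
  ∑ j, θ.1 j * gaussDensity x (θ.2.1 j) (θ.2.2 j)

/-- Membership in the compact sieve `S_{m,ε}`. -/
def memSieve (k : ℕ) (m ε : ℝ) (θ : MixParam k) : Prop :=
  (∀ j, 0 ≤ θ.1 j) ∧ (∑ j, θ.1 j = 1) ∧
    ∀ j, ε ≤ θ.1 j ∧ |θ.2.1 j| ≤ m ∧ Real.exp (-m) ≤ θ.2.2 j ∧ θ.2.2 j ≤ Real.exp m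

section Aux

lemma one_le_sqrt_two_pi : (1 : ℝ) ≤ Real.sqrt (2 * Real.pi) := by
  rw [show (1:ℝ) = Real.sqrt 1 from (Real.sqrt_one).symm]
  exact Real.sqrt_le_sqrt (by nlinarith [Real.pi_gt_three])

lemma gaussDensity_pos (x μ σ : ℝ) (hσ : 0 < σ) : 0 < gaussDensity x μ σ := by
  unfold gaussDensity
  have h2π : 0 < Real.sqrt (2 * Real.pi) := lt_of_lt_of_le one_pos one_le_sqrt_two_pi
  positivity

lemma mixDensity_pos {k : ℕ} (hk : 0 < k) {m ε : ℝ} (hε : 0 < ε) {θ : MixParam k}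
    (hθ : memSieve k m ε θ) (x : ℝ) : 0 < mixDensity k θ x := by
  unfold mixDensity
  have : Nonempty (Fin k) := ⟨⟨0, hk⟩⟩
  apply Finset.sum_pos
  · intro j _
    have hσ : 0 < θ.2.2 j := lt_of_lt_of_le (Real.exp_pos _) ((hθ.2.2 j).2.2.1)
    exact mul_pos (lt_of_lt_of_le hε ((hθ.2.2 j).1)) (gaussDensity_pos _ _ _ hσ)
  · exact Finset.univ_nonempty

/-- Envelope constant. -/
noncomputable def sieveK (m ε : ℝ) : ℝ :=
  (-Real.log ε) + m + Real.log (Real.sqrt (2 * Real.pi)) + (m ^ 2 + 1) * Real.exp (2 * m)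

lemma sieveK_nonneg {m ε : ℝ} (hm : 1 ≤ m) (hε : 0 < ε) (hε1 : ε ≤ 1) : 0 ≤ sieveK m ε := by
  unfold sieveK
  have h1 : Real.log ε ≤ 0 := Real.log_nonpos hε.le hε1
  have h2 : 0 ≤ Real.log (Real.sqrt (2 * Real.pi)) := Real.log_nonneg one_le_sqrt_two_pi
  nlinarith [Real.exp_pos (2 * m)]

lemma abs_log_mixDensity_le {k : ℕ} (hk : 0 < k) {m ε : ℝ} (hm : 1 ≤ m) (hε : 0 < ε)
    (hε1 : ε ≤ 1) {θ : MixParam k} (hθ : memSieve k m ε θ) (x : ℝ) :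
    |Real.log (mixDensity k θ x)| ≤ sieveK m ε * (1 + x ^ 2) := by
  set s2π : ℝ := Real.sqrt (2 * Real.pi) with hs2π_def
  have hs2π : 1 ≤ s2π := one_le_sqrt_two_pi
  have hs2πpos : 0 < s2π := lt_of_lt_of_le one_pos hs2π
  have hfpos : 0 < mixDensity k θ x := mixDensity_pos hk hε hθ x
  -- upper bound : mixDensity ≤ exp m
  have hfu : mixDensity k θ x ≤ Real.exp m := by
    unfold mixDensity
    calc ∑ j, θ.1 j * gaussDensity x (θ.2.1 j) (θ.2.2 j)
        ≤ ∑ j, θ.1 j * Real.exp m := by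
          apply Finset.sum_le_sum
          intro j _
          apply mul_le_mul_of_nonneg_left _ (hθ.1 j)
          obtain ⟨-, -, hσl, hσu⟩ := hθ.2.2 j
          have hσpos : 0 < θ.2.2 j := lt_of_lt_of_le (Real.exp_pos _) hσl
          unfold gaussDensity
          have h1 : (s2π)⁻¹ ≤ 1 := inv_le_one_of_one_le₀ hs2π
          have h2 : (θ.2.2 j)⁻¹ ≤ Real.exp m := by
            rw [show Real.exp m = (Real.exp (-m))⁻¹ by rw [Real.exp_neg, inv_inv]]
            exact inv_anti₀ (Real.exp_pos _) hσl
          have h3 : Real.exp (-(x - θ.2.1 j) ^ 2 / (2 * θ.2.2 j ^ 2)) ≤ 1 := by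
            rw [Real.exp_le_one_iff]
            apply div_nonpos_of_nonpos_of_nonneg
            · simp [sq_nonneg]
            · positivity
          have h4 : (s2π)⁻¹ * (θ.2.2 j)⁻¹ ≤ 1 * Real.exp m :=
            mul_le_mul h1 h2 (by positivity) zero_le_one
          calc s2π⁻¹ * (θ.2.2 j)⁻¹ * Real.exp (-(x - θ.2.1 j) ^ 2 / (2 * θ.2.2 j ^ 2))
              ≤ (1 * Real.exp m) * 1 := mul_le_mul h4 h3 (Real.exp_nonneg _) (by positivity)
            _ = Real.exp m := by ring
      _ = Real.exp m := by rw [← Finset.sum_mul, hθ.2.1, one_mul]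
  have hlogu : Real.log (mixDensity k θ x) ≤ m := by
    calc Real.log (mixDensity k θ x) ≤ Real.log (Real.exp m) := Real.log_le_log hfpos hfu
      _ = m := Real.log_exp m
  -- lower bound
  set j0 : Fin k := ⟨0, hk⟩ with hj0
  obtain ⟨hπ0, hμ0, hσl0, hσu0⟩ := hθ.2.2 j0
  have hσpos : 0 < θ.2.2 j0 := lt_of_lt_of_le (Real.exp_pos _) hσl0
  set glb : ℝ := s2π⁻¹ * Real.exp (-m) * Real.exp (-((x ^ 2 + m ^ 2) * Real.exp (2 * m)))
    with hglb_def
  have hglbpos : 0 < glb := by positivity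
  have hgauss_lb : glb ≤ gaussDensity x (θ.2.1 j0) (θ.2.2 j0) := by
    unfold gaussDensity
    have h2 : Real.exp (-m) ≤ (θ.2.2 j0)⁻¹ := by
      rw [Real.exp_neg]
      exact inv_anti₀ hσpos hσu0
    have h3 : Real.exp (-((x ^ 2 + m ^ 2) * Real.exp (2 * m)))
        ≤ Real.exp (-(x - θ.2.1 j0) ^ 2 / (2 * θ.2.2 j0 ^ 2)) := by
      apply Real.exp_le_exp.2
      rw [neg_div, neg_le_neg_iff]
      have hμsq : (θ.2.1 j0) ^ 2 ≤ m ^ 2 := by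
        have := abs_le.1 hμ0
        nlinarith
      have hnum : (x - θ.2.1 j0) ^ 2 ≤ 2 * x ^ 2 + 2 * m ^ 2 := by
        nlinarith [sq_nonneg (x + θ.2.1 j0), hμsq]
      have hden : 2 * Real.exp (-m) ^ 2 ≤ 2 * θ.2.2 j0 ^ 2 := by nlinarith [Real.exp_pos (-m)]
      have hdenpos : 0 < 2 * Real.exp (-m) ^ 2 := by positivity
      calc (x - θ.2.1 j0) ^ 2 / (2 * θ.2.2 j0 ^ 2)
          ≤ (2 * x ^ 2 + 2 * m ^ 2) / (2 * Real.exp (-m) ^ 2) :=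
            div_le_div₀ (by positivity) hnum hdenpos hden
        _ = (x ^ 2 + m ^ 2) * Real.exp (2 * m) := by
            rw [show Real.exp (-m) = (Real.exp m)⁻¹ from Real.exp_neg m,
              show Real.exp (2 * m) = Real.exp m * Real.exp m by
                rw [← Real.exp_add]; ring_nf]
            field_simp
    calc glb = s2π⁻¹ * Real.exp (-m) * Real.exp (-((x ^ 2 + m ^ 2) * Real.exp (2 * m))) := rfl
      _ ≤ s2π⁻¹ * (θ.2.2 j0)⁻¹ * Real.exp (-(x - θ.2.1 j0) ^ 2 / (2 * θ.2.2 j0 ^ 2)) := by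
          apply mul_le_mul
          · exact mul_le_mul_of_nonneg_left h2 (by positivity)
          · exact h3
          · positivity
          · positivity
  have hflb : ε * glb ≤ mixDensity k θ x := by
    have h1 : θ.1 j0 * gaussDensity x (θ.2.1 j0) (θ.2.2 j0) ≤ mixDensity k θ x := by
      unfold mixDensity
      apply Finset.single_le_sum (f := fun j => θ.1 j * gaussDensity x (θ.2.1 j) (θ.2.2 j))
      · intro i _
        have hσi : 0 < θ.2.2 i := lt_of_lt_of_le (Real.exp_pos _) ((hθ.2.2 i).2.2.1)
        exact mul_nonneg (hθ.1 i) (gaussDensity_pos _ _ _ hσi).le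
      · exact Finset.mem_univ j0
    calc ε * glb ≤ θ.1 j0 * gaussDensity x (θ.2.1 j0) (θ.2.2 j0) :=
          mul_le_mul hπ0 hgauss_lb hglbpos.le ((le_trans hε.le hπ0))
      _ ≤ mixDensity k θ x := h1
  have hlogl : Real.log ε + (-Real.log s2π) + (-m) + (-((x ^ 2 + m ^ 2) * Real.exp (2 * m)))
      ≤ Real.log (mixDensity k θ x) := by
    have h1 : Real.log (ε * glb) ≤ Real.log (mixDensity k θ x) :=
      Real.log_le_log (by positivity) hflb
    have h2 : Real.log (ε * glb) = Real.log ε + (-Real.log s2π) + (-m)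
        + (-((x ^ 2 + m ^ 2) * Real.exp (2 * m))) := by
      rw [hglb_def]
      rw [Real.log_mul hε.ne' (by positivity), Real.log_mul (by positivity) (by positivity),
        Real.log_mul (by positivity) (by positivity), Real.log_inv, Real.log_exp, Real.log_exp]
      ring
    linarith
  -- conclude
  have hK0 : 0 ≤ sieveK m ε := sieveK_nonneg hm hε hε1
  have hlogε : Real.log ε ≤ 0 := Real.log_nonpos hε.le hε1
  have hlogs : 0 ≤ Real.log s2π := Real.log_nonneg hs2π
  have hexp : 0 < Real.exp (2 * m) := Real.exp_pos _
  rw [abs_le]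
  have hKeq : sieveK m ε = (-Real.log ε) + m + Real.log s2π
      + m ^ 2 * Real.exp (2 * m) + Real.exp (2 * m) := by
    rw [hs2π_def]; unfold sieveK; ring
  have hm2e : 0 ≤ m ^ 2 * Real.exp (2 * m) := by positivity
  have hdiff : 0 ≤ sieveK m ε - Real.exp (2 * m) := by rw [hKeq]; linarith
  have hx2 : 0 ≤ (sieveK m ε - Real.exp (2 * m)) * x ^ 2 := mul_nonneg hdiff (sq_nonneg x)
  have hKx2 : 0 ≤ sieveK m ε * x ^ 2 := mul_nonneg hK0 (sq_nonneg x)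
  have hexpand : sieveK m ε * (1 + x ^ 2)
      = sieveK m ε + (sieveK m ε - Real.exp (2 * m)) * x ^ 2 + Real.exp (2 * m) * x ^ 2 := by
    ring
  have hsplit : (x ^ 2 + m ^ 2) * Real.exp (2 * m)
      = Real.exp (2 * m) * x ^ 2 + m ^ 2 * Real.exp (2 * m) := by ring
  constructor
  · linarith [hlogl]
  · have hexpand2 : sieveK m ε * (1 + x ^ 2) = sieveK m ε + sieveK m ε * x ^ 2 := by ring
    linarith [hlogu]

lemma sieve_isCompact (k : ℕ) (m ε : ℝ) : IsCompact {θ : MixParam k | memSieve k m ε θ} := by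
  have hbox : IsCompact ((Set.univ.pi fun _ : Fin k => Set.Icc (0:ℝ) 1) ×ˢ
      ((Set.univ.pi fun _ : Fin k => Set.Icc (-m) m) ×ˢ
        (Set.univ.pi fun _ : Fin k => Set.Icc (Real.exp (-m)) (Real.exp m)))) :=
    (isCompact_univ_pi fun _ => isCompact_Icc).prod
      ((isCompact_univ_pi fun _ => isCompact_Icc).prod
        (isCompact_univ_pi fun _ => isCompact_Icc))
  apply hbox.of_isClosed_subset
  · -- closedness
    have cπ : ∀ j, Continuous fun θ : MixParam k => θ.1 j :=
      fun j => (continuous_apply j).comp continuous_fst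
    have cμ : ∀ j, Continuous fun θ : MixParam k => θ.2.1 j :=
      fun j => (continuous_apply j).comp (continuous_fst.comp continuous_snd)
    have cσ : ∀ j, Continuous fun θ : MixParam k => θ.2.2 j :=
      fun j => (continuous_apply j).comp (continuous_snd.comp continuous_snd)
    have : {θ : MixParam k | memSieve k m ε θ} =
        (⋂ j, {θ : MixParam k | 0 ≤ θ.1 j}) ∩ ({θ : MixParam k | ∑ j, θ.1 j = 1} ∩
          ⋂ j, ({θ : MixParam k | ε ≤ θ.1 j} ∩ ({θ : MixParam k | |θ.2.1 j| ≤ m} ∩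
            ({θ : MixParam k | Real.exp (-m) ≤ θ.2.2 j} ∩
              {θ : MixParam k | θ.2.2 j ≤ Real.exp m})))) := by
      ext θ
      simp only [memSieve, Set.mem_setOf_eq, Set.mem_inter_iff, Set.mem_iInter]
    rw [this]
    refine IsClosed.inter (isClosed_iInter fun j => isClosed_le continuous_const (cπ j))
      (IsClosed.inter (isClosed_eq (continuous_finset_sum _ fun j _ => cπ j) continuous_const)
        (isClosed_iInter fun j =>
          IsClosed.inter (isClosed_le continuous_const (cπ j))
            (IsClosed.inter (isClosed_le (cμ j).abs continuous_const)
              (IsClosed.inter (isClosed_le continuous_const (cσ j))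
                (isClosed_le (cσ j) continuous_const)))))
  · -- subset
    rintro θ ⟨h1, h2, h3⟩
    refine ⟨fun j _ => ⟨h1 j, ?_⟩, fun j _ => abs_le.1 (h3 j).2.1, fun j _ =>
      ⟨(h3 j).2.2.1, (h3 j).2.2.2⟩⟩
    calc θ.1 j ≤ ∑ i, θ.1 i := Finset.single_le_sum (fun i _ => h1 i) (Finset.mem_univ j)
      _ = 1 := h2

end Aux

/-- Uniform law of large numbers on the sieve: for i.i.d. data with a finite fourth
moment, the empirical mean of `log f_θ` converges to its expectation uniformly over
`θ ∈ S_{m,ε}`, almost surely. -/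


theorem mixture_ULLN (k : ℕ) (hk : 2 ≤ k) (m ε : ℝ) (hm : 1 ≤ m)
    (hε : 0 < ε) (hεk : ε ≤ 1 / k)
    {Ω : Type*} [MeasureSpace Ω] [IsProbabilityMeasure (ℙ : Measure Ω)]
    (X : ℕ → Ω → ℝ) (hmeas : ∀ i, Measurable (X i))
    (hindep : ProbabilityTheory.iIndepFun X ℙ)
    (hident : ∀ i, ProbabilityTheory.IdentDistrib (X i) (X 0) ℙ ℙ)
    (hmom : Integrable (fun ω => (X 0 ω) ^ 4) ℙ) :
    ∀ᵐ ω ∂(ℙ : Measure Ω),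
      Tendsto (fun n : ℕ =>
          ⨆ θ : {θ : MixParam k // memSieve k m ε θ},
            |(1 / n : ℝ) * ∑ i ∈ Finset.range n, Real.log (mixDensity k θ.1 (X i ω))
              - ∫ ω', Real.log (mixDensity k θ.1 (X 0 ω')) ∂ℙ|)
        atTop (nhds 0) := by
  have hk0 : 0 < k := by omega
  have hkR : (1:ℝ) ≤ (k : ℝ) := by exact_mod_cast Nat.one_le_of_lt hk
  have hε1 : ε ≤ 1 := hεk.trans (by rw [div_le_one (by linarith)]; exact hkR)
  set S := {θ : MixParam k // memSieve k m ε θ} with hS_def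
  haveI : CompactSpace S := isCompact_iff_compactSpace.mp (sieve_isCompact k m ε)
  haveI : Nonempty S := by
    refine ⟨⟨(fun _ => (k:ℝ)⁻¹, fun _ => 0, fun _ => 1), ?_, ?_, ?_⟩⟩
    · intro j; positivity
    · simp [Finset.sum_const, Finset.card_fin, nsmul_eq_mul]
      exact mul_inv_cancel₀ (by positivity)
    · intro j
      refine ⟨by rw [inv_eq_one_div]; exact hεk, by simpa using (by linarith : (0:ℝ) ≤ m), ?_, ?_⟩
      · exact Real.exp_le_one_iff.2 (by linarith)
      · exact Real.one_le_exp (by linarith)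
  -- the Banach space
  letI E := BoundedContinuousFunction S ℝ
  letI : MeasurableSpace E := borel E
  haveI : BorelSpace E := ⟨rfl⟩
  -- positivity on the sieve
  have hσpos : ∀ (θ : S) (j : Fin k), 0 < θ.1.2.2 j :=
    fun θ j => lt_of_lt_of_le (Real.exp_pos _) ((θ.2.2.2 j).2.2.1)
  have hpos : ∀ (p : ℝ × S), 0 < mixDensity k p.2.1 p.1 :=
    fun p => mixDensity_pos hk0 hε p.2.2 p.1
  -- continuity
  have hmixc : Continuous fun p : ℝ × S => mixDensity k p.2.1 p.1 := by
    unfold mixDensity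
    apply continuous_finset_sum
    intro j _
    have hx : Continuous fun p : ℝ × S => p.1 := continuous_fst
    have hSv : Continuous fun p : ℝ × S => (p.2 : MixParam k) :=
      continuous_subtype_val.comp continuous_snd
    have hπ : Continuous fun p : ℝ × S => p.2.1.1 j :=
      (continuous_apply j).comp (continuous_fst.comp hSv)
    have hμ : Continuous fun p : ℝ × S => p.2.1.2.1 j :=
      (continuous_apply j).comp ((continuous_fst.comp continuous_snd).comp hSv)
    have hσ : Continuous fun p : ℝ × S => p.2.1.2.2 j :=
      (continuous_apply j).comp ((continuous_snd.comp continuous_snd).comp hSv)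
    have hσne : ∀ p : ℝ × S, p.2.1.2.2 j ≠ 0 := fun p => (hσpos p.2 j).ne'
    unfold gaussDensity
    exact hπ.mul ((continuous_const.mul (hσ.inv₀ hσne)).mul
      (Real.continuous_exp.comp ((((hx.sub hμ).pow 2).neg).div
        (continuous_const.mul (hσ.pow 2)) (fun p => by
          have := hσpos p.2 j; positivity))))
  have hcont : Continuous fun p : ℝ × S => Real.log (mixDensity k p.2.1 p.1) :=
    hmixc.log fun p => (hpos p).ne'
  -- the map into the Banach space
  set G : C(ℝ × S, ℝ) := ⟨fun p => Real.log (mixDensity k p.2.1 p.1), hcont⟩ with hG_def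
  set φ : ℝ → E := fun x => ContinuousMap.isometryEquivBoundedOfCompact S ℝ (G.curry x)
    with hφ_def
  have hφc : Continuous φ :=
    (ContinuousMap.isometryEquivBoundedOfCompact S ℝ).continuous.comp G.curry.continuous
  have hφ_apply : ∀ (x : ℝ) (θ : S), φ x θ = Real.log (mixDensity k θ.1 x) := fun x θ => rfl
  have hφm : Measurable φ := hφc.measurable
  set Y : ℕ → Ω → E := fun i ω => φ (X i ω) with hY_def
  -- integrability
  have hK0 : 0 ≤ sieveK m ε := sieveK_nonneg hm hε hε1
  have hint2 : Integrable (fun ω => (X 0 ω) ^ 2) ℙ := by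
    refine ((integrable_const (1:ℝ)).add hmom).mono'
      (((hmeas 0).pow_const 2).aestronglyMeasurable) (ae_of_all _ fun ω => ?_)
    rw [Real.norm_eq_abs, abs_of_nonneg (sq_nonneg _)]
    simp only [Pi.add_apply]
    nlinarith [sq_nonneg ((X 0 ω) ^ 2 - 1), sq_nonneg (X 0 ω)]
  have hintY : Integrable (Y 0) ℙ := by
    refine Integrable.mono' (g := fun ω => sieveK m ε * (1 + (X 0 ω) ^ 2))
      (((integrable_const (1:ℝ)).add hint2).const_mul _)
      (hφc.comp_stronglyMeasurable (hmeas 0).stronglyMeasurable).aestronglyMeasurable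
      (ae_of_all _ fun ω => ?_)
    refine (BoundedContinuousFunction.norm_le (by positivity)).2 fun θ => ?_
    rw [hφ_apply, Real.norm_eq_abs]
    exact abs_log_mixDensity_le hk0 hm hε hε1 θ.2 (X 0 ω)
  -- independence and identical distribution
  have hindepY : Pairwise (Function.onFun (fun f g => IndepFun f g ℙ) Y) :=
    fun i j hij => (hindep.indepFun hij).comp hφm hφm
  have hidentY : ∀ i, IdentDistrib (Y i) (Y 0) ℙ ℙ := fun i => (hident i).comp hφm
  -- strong law in the Banach space
  have hSLLN := ProbabilityTheory.strong_law_ae Y hintY hindepY hidentY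
  filter_upwards [hSLLN] with ω hω
  set L : E := ∫ ω', Y 0 ω' ∂ℙ with hL_def
  have hLθ : ∀ θ : S, L θ = ∫ ω', Real.log (mixDensity k θ.1 (X 0 ω')) ∂ℙ := by
    intro θ
    have := (BoundedContinuousFunction.evalCLM (α := S) (β := ℝ) ℝ θ).integral_comp_comm hintY
    rw [hL_def]
    rw [show (∫ ω', Y 0 ω' ∂ℙ) θ
        = (BoundedContinuousFunction.evalCLM (α := S) (β := ℝ) ℝ θ) (∫ ω', Y 0 ω' ∂ℙ) from rfl,
      ← this]
    simp only [BoundedContinuousFunction.evalCLM_apply]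
    exact integral_congr_ae (ae_of_all _ fun ω' => hφ_apply (X 0 ω') θ)
  have hnorm : Tendsto (fun n : ℕ => ‖(n : ℝ)⁻¹ • (∑ i ∈ Finset.range n, Y i ω) - L‖)
      atTop (nhds 0) := tendsto_iff_norm_sub_tendsto_zero.mp hω
  apply squeeze_zero (g := fun n : ℕ => ‖(n : ℝ)⁻¹ • (∑ i ∈ Finset.range n, Y i ω) - L‖)
  · intro n
    exact Real.iSup_nonneg fun θ => abs_nonneg _
  · intro n
    apply ciSup_le
    intro θ
    have key : (1 / n : ℝ) * ∑ i ∈ Finset.range n, Real.log (mixDensity k θ.1 (X i ω))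
        - ∫ ω', Real.log (mixDensity k θ.1 (X 0 ω')) ∂ℙ
        = ((n : ℝ)⁻¹ • (∑ i ∈ Finset.range n, Y i ω) - L) θ := by
      rw [BoundedContinuousFunction.sub_apply, BoundedContinuousFunction.smul_apply,
        hLθ θ]
      congr 1
      rw [one_div, smul_eq_mul]
      congr 1
      rw [BoundedContinuousFunction.coe_sum, Finset.sum_apply]
      exact Finset.sum_congr rfl fun i _ => (hφ_apply _ θ).symm
    rw [key, ← Real.norm_eq_abs]
    exact BoundedContinuousFunction.norm_coe_le_norm _ θ
  · exact hnorm
end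

section
/- Fix k ≥ 2, m ≥ 1, ε ∈ (0,1/k], and let θ₀ = (π⁰,μ⁰,σ⁰) ∈ S_{m,ε} have all weights π_j⁰ > 0 and pairwise distinct component pairs (μ_j⁰,σ_j⁰). Let X be a random variable with density f_{θ₀} and set ℓ(θ) = E[log f_θ(X)] for θ ∈ S_{m,ε}. Then for every δ > 0 there exists η > 0 such that ℓ(θ) ≤ ℓ(θ₀) − η for every θ ∈ S_{m,ε} with d_min(θ, θ₀) ≥ δ. -/
open MeasureTheory

/-- Minimum matching distance between mixture parameters
(`ℓ²` on means and st. devs, `ℓ¹` on weights, minimized over permutations). -/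
noncomputable def dMin (k : ℕ) (θ θ' : MixParam k) : ℝ :=
  ⨅ τ : Equiv.Perm (Fin k),
    (Real.sqrt (∑ j, (θ.2.1 (τ j) - θ'.2.1 j) ^ 2)
      + Real.sqrt (∑ j, (θ.2.2 (τ j) - θ'.2.2 j) ^ 2)
      + ∑ j, |θ.1 (τ j) - θ'.1 j|)

/-- Population expected log-likelihood `ℓ(θ) = E_{θ₀}[log f_θ(X)]`
when `X` has density `f_{θ₀}` (with respect to Lebesgue measure). -/
noncomputable def popLogLik (k : ℕ) (θ₀ θ : MixParam k) : ℝ :=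
  ∫ x : ℝ, Real.log (mixDensity k θ x) * mixDensity k θ₀ x

/-! ### Auxiliary lemmas -/

open Real Filter Topology

section Aux

lemma sqrt2pi_pos : 0 < Real.sqrt (2 * Real.pi) :=
  Real.sqrt_pos.2 (by positivity)

lemma gd_pos {σ : ℝ} (hσ : 0 < σ) (x μ : ℝ) : 0 < gaussDensity x μ σ := by
  unfold gaussDensity
  have := sqrt2pi_pos
  positivity

lemma gd_cont (μ σ : ℝ) : Continuous (fun x => gaussDensity x μ σ) := by
  unfold gaussDensity; fun_prop

lemma gd_eq_pdf {σ : ℝ} (hσ : 0 < σ) (μ x : ℝ) :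
    gaussDensity x μ σ = ProbabilityTheory.gaussianPDFReal μ ⟨σ^2, sq_nonneg σ⟩ x := by
  unfold gaussDensity ProbabilityTheory.gaussianPDFReal
  change _ = (Real.sqrt (2 * Real.pi * σ^2))⁻¹ * Real.exp (-(x - μ) ^ 2 / (2 * σ^2))
  rw [Real.sqrt_mul (by positivity : (0:ℝ) ≤ 2 * Real.pi), Real.sqrt_sq hσ.le, mul_inv]

lemma gd_integral {σ : ℝ} (hσ : 0 < σ) (μ : ℝ) : ∫ x, gaussDensity x μ σ = 1 := by
  have h : (⟨σ^2, sq_nonneg σ⟩ : NNReal) ≠ 0 := by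
    intro h
    have := congrArg (fun v : NNReal => (v : ℝ)) h
    change σ^2 = 0 at this
    exact hσ.ne' (by nlinarith)
  rw [show (fun x => gaussDensity x μ σ) = ProbabilityTheory.gaussianPDFReal μ ⟨σ^2, sq_nonneg σ⟩
    from funext fun x => gd_eq_pdf hσ μ x]
  exact ProbabilityTheory.integral_gaussianPDFReal_eq_one μ h

lemma gd_integrable {σ : ℝ} (hσ : 0 < σ) (μ : ℝ) : Integrable (fun x => gaussDensity x μ σ) := by
  rw [show (fun x => gaussDensity x μ σ) = ProbabilityTheory.gaussianPDFReal μ ⟨σ^2, sq_nonneg σ⟩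
    from funext fun x => gd_eq_pdf hσ μ x]
  exact ProbabilityTheory.integrable_gaussianPDFReal μ _

lemma int_exp_sq {b : ℝ} (hb : 0 < b) (c : ℝ) :
    Integrable (fun x : ℝ => Real.exp (-b*(x-c)^2)) :=
  (integrable_exp_neg_mul_sq hb).comp_sub_right c

lemma sq_mul_exp_le {b : ℝ} (u : ℝ) (hb : 0 < b) :
    u^2 * Real.exp (-b*u^2) ≤ (2/b) * Real.exp (-(b/2)*u^2) := by
  have h1 : (b/2) * u^2 ≤ Real.exp ((b/2)*u^2) := by
    have := Real.add_one_le_exp ((b/2)*u^2)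
    linarith
  have h2 : u^2 ≤ (2/b) * Real.exp ((b/2)*u^2) := by
    calc u^2 = (2/b) * ((b/2) * u^2) := by field_simp
    _ ≤ (2/b) * Real.exp ((b/2)*u^2) := mul_le_mul_of_nonneg_left h1 (by positivity)
  calc u^2 * Real.exp (-b*u^2) ≤ ((2/b) * Real.exp ((b/2)*u^2)) * Real.exp (-b*u^2) :=
        mul_le_mul_of_nonneg_right h2 (Real.exp_nonneg _)
  _ = (2/b) * Real.exp (-(b/2)*u^2) := by
        rw [mul_assoc, ← Real.exp_add]
        congr 1
        ring

lemma gd_eq_exp (μ : ℝ) {σ : ℝ} (hσ : 0 < σ) (x : ℝ) :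
    gaussDensity x μ σ
      = ((Real.sqrt (2 * Real.pi))⁻¹ * σ⁻¹) * Real.exp (-(1/(2*σ^2))*(x-μ)^2) := by
  unfold gaussDensity
  congr 1
  field_simp

/-- quadratic times gaussian is integrable -/
lemma integrable_quad_mul_gd {σ : ℝ} (hσ : 0 < σ) (μ A B : ℝ) :
    Integrable (fun x => (A + B * x^2) * gaussDensity x μ σ) := by
  set K : ℝ := (Real.sqrt (2 * Real.pi))⁻¹ * σ⁻¹ with hK
  have hKpos : 0 < K := by
    have := sqrt2pi_pos
    rw [hK]; positivity
  set b : ℝ := 1/(2*σ^2) with hb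
  have hbpos : 0 < b := by rw [hb]; positivity
  have hgd : ∀ x, gaussDensity x μ σ = K * Real.exp (-b*(x-μ)^2) := fun x => gd_eq_exp μ hσ x
  set C₁ : ℝ := K * (|A| + 2 * |B| * μ^2) with hC₁
  set C₂ : ℝ := 2 * |B| * K * (2/b) with hC₂
  apply Integrable.mono'
    (g := fun x => C₁ * Real.exp (-b*(x-μ)^2) + C₂ * Real.exp (-(b/2)*(x-μ)^2))
  · exact ((int_exp_sq hbpos μ).const_mul C₁).add ((int_exp_sq (half_pos hbpos) μ).const_mul C₂)
  · exact ((continuous_const.add (continuous_const.mul (continuous_pow 2))).mul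
      (gd_cont μ σ)).aestronglyMeasurable
  · refine ae_of_all _ fun x => ?_
    have habs : |A + B * x^2| ≤ |A| + 2 * |B| * μ^2 + 2 * |B| * (x-μ)^2 := by
      calc |A + B * x^2| ≤ |A| + |B * x^2| := abs_add_le _ _
      _ = |A| + |B| * x^2 := by rw [abs_mul, abs_of_nonneg (sq_nonneg x)]
      _ ≤ |A| + 2 * |B| * μ^2 + 2 * |B| * (x-μ)^2 := by
            nlinarith [mul_nonneg (abs_nonneg B) (sq_nonneg (x - 2*μ))]
    have hexp : (0:ℝ) < Real.exp (-b*(x-μ)^2) := Real.exp_pos _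
    rw [Real.norm_eq_abs, abs_mul, hgd x,
      abs_of_pos (by positivity : (0:ℝ) < K * Real.exp (-b*(x-μ)^2))]
    have h2 : (2 * |B| * (x-μ)^2) * (K * Real.exp (-b*(x-μ)^2)) ≤ C₂ * Real.exp (-(b/2)*(x-μ)^2) := by
      have hs := sq_mul_exp_le (x-μ) hbpos
      calc (2 * |B| * (x-μ)^2) * (K * Real.exp (-b*(x-μ)^2))
          = (2 * |B| * K) * ((x-μ)^2 * Real.exp (-b*(x-μ)^2)) := by ring
      _ ≤ (2 * |B| * K) * ((2/b) * Real.exp (-(b/2)*(x-μ)^2)) :=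
          mul_le_mul_of_nonneg_left hs (by positivity)
      _ = C₂ * Real.exp (-(b/2)*(x-μ)^2) := by rw [hC₂]; ring
    have h1 : |A + B * x^2| * (K * Real.exp (-b*(x-μ)^2)) ≤
        (|A| + 2 * |B| * μ^2 + 2 * |B| * (x-μ)^2) * (K * Real.exp (-b*(x-μ)^2)) :=
      mul_le_mul_of_nonneg_right habs (by positivity)
    have h3 : (|A| + 2 * |B| * μ^2) * (K * Real.exp (-b*(x-μ)^2)) = C₁ * Real.exp (-b*(x-μ)^2) := by
      rw [hC₁]; ring
    have h4 : (|A| + 2 * |B| * μ^2 + 2 * |B| * (x-μ)^2) * (K * Real.exp (-b*(x-μ)^2))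
        = (|A| + 2 * |B| * μ^2) * (K * Real.exp (-b*(x-μ)^2))
          + (2 * |B| * (x-μ)^2) * (K * Real.exp (-b*(x-μ)^2)) := by ring
    linarith [h1, h2, h3, h4]

variable {k : ℕ}

lemma mix_cont (θ : MixParam k) : Continuous (fun x => mixDensity k θ x) := by
  unfold mixDensity
  exact continuous_finset_sum _ fun j _ => continuous_const.mul (gd_cont _ _)

lemma mix_pos {θ : MixParam k} (hk : 0 < k) (hw : ∀ j, 0 < θ.1 j) (hσ : ∀ j, 0 < θ.2.2 j)
    (x : ℝ) : 0 < mixDensity k θ x := by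
  unfold mixDensity
  apply Finset.sum_pos
  · exact fun j _ => mul_pos (hw j) (gd_pos (hσ j) _ _)
  · exact ⟨⟨0, hk⟩, Finset.mem_univ _⟩

lemma mix_nonneg {θ : MixParam k} (hw : ∀ j, 0 ≤ θ.1 j) (hσ : ∀ j, 0 < θ.2.2 j)
    (x : ℝ) : 0 ≤ mixDensity k θ x :=
  Finset.sum_nonneg fun j _ => mul_nonneg (hw j) (gd_pos (hσ j) _ _).le

lemma integrable_quad_mul_mix (θ : MixParam k) (hσ : ∀ j, 0 < θ.2.2 j) (A B : ℝ) :
    Integrable (fun x => (A + B * x^2) * mixDensity k θ x) := by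
  have h : (fun x => (A + B * x^2) * mixDensity k θ x)
      = fun x => ∑ j, θ.1 j * ((A + B * x^2) * gaussDensity x (θ.2.1 j) (θ.2.2 j)) := by
    funext x
    unfold mixDensity
    rw [Finset.mul_sum]
    exact Finset.sum_congr rfl fun j _ => by ring
  rw [h]
  exact integrable_finset_sum _ fun j _ =>
    ((integrable_quad_mul_gd (hσ j) (θ.2.1 j) A B).const_mul (θ.1 j))

lemma mix_integrable (θ : MixParam k) (hσ : ∀ j, 0 < θ.2.2 j) :
    Integrable (fun x => mixDensity k θ x) :=
  integrable_finset_sum _ fun j _ => (gd_integrable (hσ j) (θ.2.1 j)).const_mul (θ.1 j)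

lemma mix_integral (θ : MixParam k) (hσ : ∀ j, 0 < θ.2.2 j) (hw : ∑ j, θ.1 j = 1) :
    ∫ x, mixDensity k θ x = 1 := by
  unfold mixDensity
  rw [integral_finset_sum _ fun j _ => (gd_integrable (hσ j) (θ.2.1 j)).const_mul (θ.1 j)]
  rw [← hw]
  refine Finset.sum_congr rfl fun j _ => ?_
  rw [integral_const_mul, gd_integral (hσ j) (θ.2.1 j), mul_one]

/-- Bounds on the mixture density on a box of parameters. -/
lemma mix_bounds {θ : MixParam k} {a M s S : ℝ} (hk : 0 < k)
    (ha : 0 < a) (hs : 0 < s) (hsS : s ≤ S) (hM : 0 ≤ M)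
    (hw : ∀ j, a ≤ θ.1 j ∧ θ.1 j ≤ 2) (hμ : ∀ j, |θ.2.1 j| ≤ M)
    (hσ : ∀ j, s ≤ θ.2.2 j ∧ θ.2.2 j ≤ S) (x : ℝ) :
    a * ((Real.sqrt (2 * Real.pi))⁻¹ * S⁻¹) * Real.exp (-((x^2 + M^2)/s^2)) ≤ mixDensity k θ x
      ∧ mixDensity k θ x ≤ 2 * k * ((Real.sqrt (2 * Real.pi))⁻¹ * s⁻¹) := by
  have hsp := sqrt2pi_pos
  have hσp : ∀ j, 0 < θ.2.2 j := fun j => lt_of_lt_of_le hs (hσ j).1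
  constructor
  · set j0 : Fin k := ⟨0, hk⟩
    have hterm : a * ((Real.sqrt (2 * Real.pi))⁻¹ * S⁻¹) * Real.exp (-((x^2 + M^2)/s^2))
        ≤ θ.1 j0 * gaussDensity x (θ.2.1 j0) (θ.2.2 j0) := by
      have hμ2 : (θ.2.1 j0)^2 ≤ M^2 := by
        have := hμ j0
        nlinarith [abs_nonneg (θ.2.1 j0), sq_abs (θ.2.1 j0)]
      have h1 : (x - θ.2.1 j0)^2 / (2 * (θ.2.2 j0)^2) ≤ (x^2 + M^2)/s^2 := by
        have e1 : (x^2 + M^2)/s^2 = (2*x^2 + 2*M^2)/(2*s^2) := by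
          field_simp
        rw [e1]
        apply div_le_div₀ (by positivity) ?_ (by positivity) ?_
        · nlinarith [sq_nonneg (x + θ.2.1 j0)]
        · nlinarith [(hσ j0).1, hs]
      have h2 : Real.exp (-((x^2 + M^2)/s^2))
          ≤ Real.exp (-(x - θ.2.1 j0)^2 / (2 * (θ.2.2 j0)^2)) := by
        apply Real.exp_le_exp.2
        rw [neg_div]
        linarith
      have hσ0 : 0 < θ.2.2 j0 := lt_of_lt_of_le hs (hσ j0).1
      have h3 : a * ((Real.sqrt (2 * Real.pi))⁻¹ * S⁻¹)
          ≤ θ.1 j0 * ((Real.sqrt (2 * Real.pi))⁻¹ * (θ.2.2 j0)⁻¹) := by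
        apply mul_le_mul (hw j0).1 ?_
          (mul_nonneg (inv_nonneg.2 sqrt2pi_pos.le) (inv_nonneg.2 (le_trans hs.le hsS)))
          (le_trans ha.le (hw j0).1)
        apply mul_le_mul_of_nonneg_left ?_ (inv_nonneg.2 sqrt2pi_pos.le)
        apply inv_anti₀ (lt_of_lt_of_le hs (hσ j0).1)
        exact (hσ j0).2
      calc a * ((Real.sqrt (2 * Real.pi))⁻¹ * S⁻¹) * Real.exp (-((x^2 + M^2)/s^2))
          ≤ (θ.1 j0 * ((Real.sqrt (2 * Real.pi))⁻¹ * (θ.2.2 j0)⁻¹))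
              * Real.exp (-((x^2 + M^2)/s^2)) :=
            mul_le_mul_of_nonneg_right h3 (Real.exp_nonneg _)
      _ ≤ (θ.1 j0 * ((Real.sqrt (2 * Real.pi))⁻¹ * (θ.2.2 j0)⁻¹))
            * Real.exp (-(x - θ.2.1 j0)^2 / (2 * (θ.2.2 j0)^2)) := by
            exact mul_le_mul_of_nonneg_left h2
              (mul_nonneg (le_trans ha.le (hw j0).1)
                (mul_nonneg (inv_nonneg.2 sqrt2pi_pos.le) (inv_nonneg.2 hσ0.le)))
      _ = θ.1 j0 * gaussDensity x (θ.2.1 j0) (θ.2.2 j0) := by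
            unfold gaussDensity
            ring
    calc a * ((Real.sqrt (2 * Real.pi))⁻¹ * S⁻¹) * Real.exp (-((x^2 + M^2)/s^2))
        ≤ θ.1 j0 * gaussDensity x (θ.2.1 j0) (θ.2.2 j0) := hterm
    _ ≤ mixDensity k θ x := by
        unfold mixDensity
        exact Finset.single_le_sum
          (fun j _ => mul_nonneg (le_trans ha.le (hw j).1) (gd_pos (hσp j) _ _).le)
          (Finset.mem_univ j0)
  · unfold mixDensity
    calc ∑ j, θ.1 j * gaussDensity x (θ.2.1 j) (θ.2.2 j)
        ≤ ∑ _j : Fin k, 2 * ((Real.sqrt (2 * Real.pi))⁻¹ * s⁻¹) := by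
          refine Finset.sum_le_sum fun j _ => ?_
          have hgle : gaussDensity x (θ.2.1 j) (θ.2.2 j) ≤ (Real.sqrt (2 * Real.pi))⁻¹ * s⁻¹ := by
            unfold gaussDensity
            have he : Real.exp (-(x - θ.2.1 j)^2 / (2 * (θ.2.2 j)^2)) ≤ 1 := by
              rw [Real.exp_le_one_iff]
              apply div_nonpos_of_nonpos_of_nonneg (neg_nonpos_of_nonneg (sq_nonneg _))
              positivity
            calc (Real.sqrt (2 * Real.pi))⁻¹ * (θ.2.2 j)⁻¹
                  * Real.exp (-(x - θ.2.1 j)^2 / (2 * (θ.2.2 j)^2))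
                ≤ (Real.sqrt (2 * Real.pi))⁻¹ * (θ.2.2 j)⁻¹ * 1 :=
                  mul_le_mul_of_nonneg_left he
                    (mul_nonneg (inv_nonneg.2 sqrt2pi_pos.le) (inv_nonneg.2 (hσp j).le))
            _ = (Real.sqrt (2 * Real.pi))⁻¹ * (θ.2.2 j)⁻¹ := mul_one _
            _ ≤ (Real.sqrt (2 * Real.pi))⁻¹ * s⁻¹ :=
                  mul_le_mul_of_nonneg_left (inv_anti₀ hs (hσ j).1)
                    (inv_nonneg.2 sqrt2pi_pos.le)
          calc θ.1 j * gaussDensity x (θ.2.1 j) (θ.2.2 j)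
              ≤ 2 * gaussDensity x (θ.2.1 j) (θ.2.2 j) :=
                mul_le_mul_of_nonneg_right (hw j).2 (gd_pos (hσp j) _ _).le
          _ ≤ 2 * ((Real.sqrt (2 * Real.pi))⁻¹ * s⁻¹) :=
                mul_le_mul_of_nonneg_left hgle (by norm_num)
    _ = 2 * k * ((Real.sqrt (2 * Real.pi))⁻¹ * s⁻¹) := by
        rw [Finset.sum_const, Finset.card_univ, Fintype.card_fin, nsmul_eq_mul]
        ring

/-- The `|log|` of the mixture density is bounded by a quadratic. -/
lemma abs_log_mix_le {θ : MixParam k} {a M s S : ℝ} (hk : 0 < k)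
    (ha : 0 < a) (hs : 0 < s) (hsS : s ≤ S) (hM : 0 ≤ M)
    (hw : ∀ j, a ≤ θ.1 j ∧ θ.1 j ≤ 2) (hμ : ∀ j, |θ.2.1 j| ≤ M)
    (hσ : ∀ j, s ≤ θ.2.2 j ∧ θ.2.2 j ≤ S) (x : ℝ) :
    |Real.log (mixDensity k θ x)| ≤
      (|Real.log (2 * k * ((Real.sqrt (2 * Real.pi))⁻¹ * s⁻¹))|
        + |Real.log (a * ((Real.sqrt (2 * Real.pi))⁻¹ * S⁻¹))| + M^2/s^2) + (1/s^2) * x^2 := by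
  obtain ⟨hlo, hhi⟩ := mix_bounds hk ha hs hsS hM hw hμ hσ x
  have hσp : ∀ j, 0 < θ.2.2 j := fun j => lt_of_lt_of_le hs (hσ j).1
  have hwp : ∀ j, 0 < θ.1 j := fun j => lt_of_lt_of_le ha (hw j).1
  have hmixpos : 0 < mixDensity k θ x := mix_pos hk hwp hσp x
  have hL : 0 < a * ((Real.sqrt (2 * Real.pi))⁻¹ * S⁻¹) := by
    have := sqrt2pi_pos
    have hSp : 0 < S := lt_of_lt_of_le hs hsS
    positivity
  rw [abs_le]
  constructor
  · have h1 : Real.log (a * ((Real.sqrt (2 * Real.pi))⁻¹ * S⁻¹) * Real.exp (-((x^2 + M^2)/s^2)))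
        ≤ Real.log (mixDensity k θ x) := Real.log_le_log (by positivity) hlo
    rw [Real.log_mul hL.ne' (Real.exp_ne_zero _), Real.log_exp] at h1
    have h2 : Real.log (a * ((Real.sqrt (2 * Real.pi))⁻¹ * S⁻¹)) ≥
        -|Real.log (a * ((Real.sqrt (2 * Real.pi))⁻¹ * S⁻¹))| := neg_abs_le _
    have h3 : -((x^2 + M^2)/s^2) = -(M^2/s^2) - (1/s^2)*x^2 := by
      field_simp
      ring
    have h4 : (0:ℝ) ≤ |Real.log (2 * k * ((Real.sqrt (2 * Real.pi))⁻¹ * s⁻¹))| := abs_nonneg _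
    linarith
  · have h1 : Real.log (mixDensity k θ x)
        ≤ Real.log (2 * k * ((Real.sqrt (2 * Real.pi))⁻¹ * s⁻¹)) := Real.log_le_log hmixpos hhi
    have h2 : Real.log (2 * k * ((Real.sqrt (2 * Real.pi))⁻¹ * s⁻¹))
        ≤ |Real.log (2 * k * ((Real.sqrt (2 * Real.pi))⁻¹ * s⁻¹))| := le_abs_self _
    have h3 : (0:ℝ) ≤ M^2/s^2 := by positivity
    have h4 : (0:ℝ) ≤ (1/s^2)*x^2 := by positivity
    have h5 : (0:ℝ) ≤ |Real.log (a * ((Real.sqrt (2 * Real.pi))⁻¹ * S⁻¹))| := abs_nonneg _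
    linarith

/-- Strict Gibbs inequality for continuous positive densities. -/
lemma gibbs (f g : ℝ → ℝ) (hfc : Continuous f) (hgc : Continuous g)
    (hfp : ∀ x, 0 < f x) (hgp : ∀ x, 0 < g x)
    (hfi : Integrable f) (hgi : Integrable g)
    (hf1 : ∫ x, f x = 1) (hg1 : ∫ x, g x = 1)
    (hLf : Integrable (fun x => Real.log (f x) * f x))
    (hLg : Integrable (fun x => Real.log (g x) * f x)) :
    (∫ x, Real.log (g x) * f x) ≤ (∫ x, Real.log (f x) * f x) ∧
      ((∫ x, Real.log (g x) * f x) = (∫ x, Real.log (f x) * f x) → g = f) := by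
  set H : ℝ → ℝ := fun x => Real.log (f x) * f x - Real.log (g x) * f x - f x + g x with hH
  have key : ∀ x, 0 ≤ H x ∧ (H x = 0 → g x = f x) := by
    intro x
    have hfx := hfp x
    have hgx := hgp x
    have hlog : Real.log (g x) - Real.log (f x) = Real.log (g x / f x) :=
      (Real.log_div hgx.ne' hfx.ne').symm
    have hle : Real.log (g x / f x) ≤ g x / f x - 1 :=
      Real.log_le_sub_one_of_pos (div_pos hgx hfx)
    have hdm : (g x / f x) * f x = g x := div_mul_cancel₀ _ hfx.ne'
    constructor
    · have h1 : (Real.log (g x) - Real.log (f x)) * f x ≤ (g x / f x - 1) * f x := by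
        rw [hlog]
        exact mul_le_mul_of_nonneg_right hle hfx.le
      have h2 : (g x / f x - 1) * f x = g x - f x := by
        rw [sub_mul, hdm, one_mul]
      simp only [hH]
      nlinarith [h1, h2]
    · intro hzero
      by_contra hne
      have hne1 : g x / f x ≠ 1 := by
        intro h1
        exact hne (by field_simp at h1; linarith)
      have hlt : Real.log (g x / f x) < g x / f x - 1 :=
        Real.log_lt_sub_one_of_pos (div_pos hgx hfx) hne1
      have h1 : (Real.log (g x) - Real.log (f x)) * f x < (g x / f x - 1) * f x := by
        rw [hlog]
        exact mul_lt_mul_of_pos_right hlt hfx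
      have h2 : (g x / f x - 1) * f x = g x - f x := by
        rw [sub_mul, hdm, one_mul]
      simp only [hH] at hzero
      nlinarith [h1, h2]
  have hHnn : ∀ x, 0 ≤ H x := fun x => (key x).1
  have i1 : Integrable (fun x => Real.log (f x) * f x - Real.log (g x) * f x) volume := by
    exact hLf.sub hLg
  have i2 : Integrable (fun x => Real.log (f x) * f x - Real.log (g x) * f x - f x) volume := by
    exact i1.sub hfi
  have hHint : Integrable H := by exact i2.add hgi
  have hHval : ∫ x, H x = (∫ x, Real.log (f x) * f x) - (∫ x, Real.log (g x) * f x) := by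
    have e0 : ∫ x, H x
        = ∫ x, (Real.log (f x) * f x - Real.log (g x) * f x - f x) + g x := rfl
    rw [e0, integral_add i2 hgi, integral_sub i1 hfi, integral_sub hLf hLg, hf1, hg1]
    ring
  constructor
  · have h0 : 0 ≤ ∫ x, H x := integral_nonneg hHnn
    linarith [hHval, h0]
  · intro heq
    have hz : ∫ x, H x = 0 := by rw [hHval, heq]; ring
    have hae : H =ᵐ[volume] 0 := (integral_eq_zero_iff_of_nonneg hHnn hHint).1 hz
    have hHc : Continuous H := by
      have hlf : Continuous fun x => Real.log (f x) := hfc.log fun x => (hfp x).ne'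
      have hlg : Continuous fun x => Real.log (g x) := hgc.log fun x => (hgp x).ne'
      exact (((hlf.mul hfc).sub (hlg.mul hfc)).sub hfc).add hgc
    have hH0 : H = fun _ => (0:ℝ) := (hHc.ae_eq_iff_eq volume continuous_const).1 hae
    funext x
    exact (key x).2 (congrFun hH0 x)

lemma quad_tendsto_atBot {a b c : ℝ} (h : a < 0 ∨ (a = 0 ∧ b < 0)) :
    Tendsto (fun x : ℝ => a*x^2 + b*x + c) atTop atBot := by
  rcases h with ha | ⟨ha, hb⟩
  · have h1 : Tendsto (fun x : ℝ => a * x) atTop atBot :=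
      (tendsto_const_mul_atBot_of_neg ha).2 tendsto_id
    have h2 : Tendsto (fun x : ℝ => a * x + b) atTop atBot :=
      tendsto_atBot_add_const_right _ b h1
    have h3 : Tendsto (fun x : ℝ => x * (a * x + b)) atTop atBot :=
      Tendsto.atTop_mul_atBot₀ tendsto_id h2
    have h4 : Tendsto (fun x : ℝ => x * (a * x + b) + c) atTop atBot :=
      tendsto_atBot_add_const_right _ c h3
    exact h4.congr fun x => by ring
  · subst ha
    have h1 : Tendsto (fun x : ℝ => b * x) atTop atBot :=
      (tendsto_const_mul_atBot_of_neg hb).2 tendsto_id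
    have h2 : Tendsto (fun x : ℝ => b * x + c) atTop atBot :=
      tendsto_atBot_add_const_right _ c h1
    exact h2.congr fun x => by ring

lemma gd_ratio {σp σq : ℝ} (hσp : 0 < σp) (hσq : 0 < σq) (μp μq x : ℝ) :
    gaussDensity x μp σp / gaussDensity x μq σq
      = (σq/σp) * Real.exp ((1/(2*σq^2) - 1/(2*σp^2))*x^2
          + (μp/σp^2 - μq/σq^2)*x + (μq^2/(2*σq^2) - μp^2/(2*σp^2))) := by
  have hq : 0 < gaussDensity x μq σq := gd_pos hσq x μq
  rw [div_eq_iff hq.ne']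
  unfold gaussDensity
  have hexp : Real.exp (-(x - μp)^2/(2*σp^2))
      = Real.exp ((1/(2*σq^2) - 1/(2*σp^2))*x^2 + (μp/σp^2 - μq/σq^2)*x
          + (μq^2/(2*σq^2) - μp^2/(2*σp^2))) * Real.exp (-(x - μq)^2/(2*σq^2)) := by
    rw [← Real.exp_add]
    congr 1
    field_simp
    ring
  have hinv : (σp:ℝ)⁻¹ = (σq/σp) * σq⁻¹ := by field_simp
  rw [hexp, hinv]
  ring

/-- Linear independence of distinct gaussian densities. -/
lemma gauss_lin_indep (S : Finset (ℝ × ℝ)) (hS : ∀ p ∈ S, 0 < p.2) (c : ℝ × ℝ → ℝ)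
    (h : ∀ x, ∑ p ∈ S, c p * gaussDensity x p.1 p.2 = 0) :
    ∀ p ∈ S, c p = 0 := by
  by_contra hcon
  push_neg at hcon
  obtain ⟨p0, hp0S, hp0⟩ := hcon
  set s := S.filter (fun p => c p ≠ 0) with hsdef
  have hsne : s.Nonempty := ⟨p0, Finset.mem_filter.2 ⟨hp0S, hp0⟩⟩
  obtain ⟨q, hq, hqmax⟩ := s.exists_max_image Prod.snd hsne
  set s2 := s.filter (fun p => p.2 = q.2) with hs2def
  have hqs2 : q ∈ s2 := Finset.mem_filter.2 ⟨hq, rfl⟩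
  obtain ⟨pm, hpm2, hpmmax⟩ := s2.exists_max_image Prod.fst ⟨q, hqs2⟩
  have hpm_s : pm ∈ s := (Finset.mem_filter.1 hpm2).1
  have hpmS : pm ∈ S := (Finset.mem_filter.1 hpm_s).1
  have hpmσ : pm.2 = q.2 := (Finset.mem_filter.1 hpm2).2
  have hσm : 0 < pm.2 := hS pm hpmS
  have hcm : c pm ≠ 0 := (Finset.mem_filter.1 hpm_s).2
  have hlim : ∀ p ∈ S, Tendsto
      (fun x => c p * (gaussDensity x p.1 p.2 / gaussDensity x pm.1 pm.2)) atTop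
      (𝓝 (if p = pm then c pm else 0)) := by
    intro p hpS
    by_cases hpp : p = pm
    · subst hpp
      rw [if_pos rfl]
      have hcp : ∀ x : ℝ, c p * (gaussDensity x p.1 p.2 / gaussDensity x p.1 p.2) = c p := by
        intro x
        rw [div_self (gd_pos (hS p hpS) x p.1).ne', mul_one]
      exact tendsto_const_nhds.congr fun x => (hcp x).symm
    · rw [if_neg hpp]
      by_cases hcp : c p = 0
      · have h0 : ∀ x : ℝ, c p * (gaussDensity x p.1 p.2 / gaussDensity x pm.1 pm.2) = 0 := by
          intro x
          rw [hcp, zero_mul]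
        exact tendsto_const_nhds.congr fun x => (h0 x).symm
      · have hps : p ∈ s := Finset.mem_filter.2 ⟨hpS, hcp⟩
        have hσp : 0 < p.2 := hS p hpS
        set a : ℝ := 1/(2*pm.2^2) - 1/(2*p.2^2) with ha
        set b : ℝ := p.1/p.2^2 - pm.1/pm.2^2 with hb
        set cc : ℝ := pm.1^2/(2*pm.2^2) - p.1^2/(2*p.2^2) with hcc
        have hcase : a < 0 ∨ (a = 0 ∧ b < 0) := by
          rcases lt_or_eq_of_le (le_trans (hqmax p hps) hpmσ.symm.le) with hlt | heq
          · left
            have h1 : 1/(2*pm.2^2) < 1/(2*p.2^2) := by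
              apply one_div_lt_one_div_of_lt (by positivity)
              nlinarith
            rw [ha]
            linarith
          · right
            have hps2 : p ∈ s2 := Finset.mem_filter.2 ⟨hps, by rw [heq, hpmσ]⟩
            have hle : p.1 ≤ pm.1 := hpmmax p hps2
            have hne : p.1 ≠ pm.1 := by
              intro h1
              exact hpp (Prod.ext h1 heq)
            constructor
            · rw [ha, heq]
              ring
            · rw [hb, heq]
              have hlt : p.1 < pm.1 := lt_of_le_of_ne hle hne
              have h2 : 0 < pm.2^2 := by positivity
              apply sub_neg.2
              exact (div_lt_div_iff_of_pos_right h2).2 hlt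
        have hE : Tendsto (fun x : ℝ => a*x^2 + b*x + cc) atTop atBot := quad_tendsto_atBot hcase
        have hexp : Tendsto (fun x : ℝ => Real.exp (a*x^2 + b*x + cc)) atTop (𝓝 0) :=
          Real.tendsto_exp_atBot.comp hE
        have hr : Tendsto (fun x : ℝ => c p * ((pm.2/p.2) * Real.exp (a*x^2 + b*x + cc)))
            atTop (𝓝 (c p * ((pm.2/p.2) * 0))) :=
          (hexp.const_mul _).const_mul _
        rw [mul_zero, mul_zero] at hr
        refine hr.congr fun x => ?_
        rw [gd_ratio hσp hσm]
  have hzero : ∀ x : ℝ,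
      ∑ p ∈ S, c p * (gaussDensity x p.1 p.2 / gaussDensity x pm.1 pm.2) = 0 := by
    intro x
    have e : ∑ p ∈ S, c p * (gaussDensity x p.1 p.2 / gaussDensity x pm.1 pm.2)
        = (∑ p ∈ S, c p * gaussDensity x p.1 p.2) * (gaussDensity x pm.1 pm.2)⁻¹ := by
      rw [Finset.sum_mul]
      exact Finset.sum_congr rfl fun p _ => by rw [div_eq_mul_inv, mul_assoc]
    rw [e, h x, zero_mul]
  have hsum : Tendsto
      (fun x => ∑ p ∈ S, c p * (gaussDensity x p.1 p.2 / gaussDensity x pm.1 pm.2))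
      atTop (𝓝 (∑ p ∈ S, if p = pm then c pm else 0)) := tendsto_finset_sum _ hlim
  have hval : (∑ p ∈ S, if p = pm then c pm else 0) = c pm := by
    rw [Finset.sum_ite_eq' S pm (fun _ => c pm)]
    exact if_pos hpmS
  have hzt : Tendsto
      (fun x => ∑ p ∈ S, c p * (gaussDensity x p.1 p.2 / gaussDensity x pm.1 pm.2))
      atTop (𝓝 0) := tendsto_const_nhds.congr fun x => (hzero x).symm
  rw [hval] at hsum
  exact hcm (tendsto_nhds_unique hsum hzt)

/-- Identifiability of gaussian mixtures. -/
lemma mix_ident (θ θ₀ : MixParam k)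
    (hσθ : ∀ j, 0 < θ.2.2 j)
    (hw₀ : ∀ j, 0 < θ₀.1 j) (hσ₀ : ∀ j, 0 < θ₀.2.2 j)
    (hdist₀ : Function.Injective (fun j => (θ₀.2.1 j, θ₀.2.2 j)))
    (heq : ∀ x, mixDensity k θ x = mixDensity k θ₀ x) :
    ∃ τ : Equiv.Perm (Fin k), ∀ j, θ.1 (τ j) = θ₀.1 j ∧ θ.2.1 (τ j) = θ₀.2.1 j
      ∧ θ.2.2 (τ j) = θ₀.2.2 j := by
  classical
  set pair : Fin k → ℝ × ℝ := fun j => (θ.2.1 j, θ.2.2 j) with hpair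
  set pair₀ : Fin k → ℝ × ℝ := fun j => (θ₀.2.1 j, θ₀.2.2 j) with hpair₀
  set T : Finset (ℝ × ℝ) := Finset.image pair Finset.univ ∪ Finset.image pair₀ Finset.univ with hT
  set c : ℝ × ℝ → ℝ := fun p =>
    (∑ j ∈ Finset.univ.filter (fun j => pair j = p), θ.1 j)
      - (∑ j ∈ Finset.univ.filter (fun j => pair₀ j = p), θ₀.1 j) with hc
  have hmaps : ∀ j : Fin k, j ∈ Finset.univ → pair j ∈ T := fun j _ =>
    Finset.mem_union_left _ (Finset.mem_image_of_mem pair (Finset.mem_univ j))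
  have hmaps₀ : ∀ j : Fin k, j ∈ Finset.univ → pair₀ j ∈ T := fun j _ =>
    Finset.mem_union_right _ (Finset.mem_image_of_mem pair₀ (Finset.mem_univ j))
  have hgroup : ∀ (w : Fin k → ℝ) (pr : Fin k → ℝ × ℝ),
      (∀ j : Fin k, j ∈ Finset.univ → pr j ∈ T) →
      ∀ x, ∑ p ∈ T, (∑ j ∈ Finset.univ.filter (fun j => pr j = p), w j) * gaussDensity x p.1 p.2
        = ∑ j, w j * gaussDensity x (pr j).1 (pr j).2 := by
    intro w pr hmp x
    rw [← Finset.sum_fiberwise_of_maps_to hmp (fun j => w j * gaussDensity x (pr j).1 (pr j).2)]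
    refine Finset.sum_congr rfl fun p _ => ?_
    rw [Finset.sum_mul]
    refine Finset.sum_congr rfl fun j hj => ?_
    rw [(Finset.mem_filter.1 hj).2]
  have hzero : ∀ x, ∑ p ∈ T, c p * gaussDensity x p.1 p.2 = 0 := by
    intro x
    have e : ∑ p ∈ T, c p * gaussDensity x p.1 p.2
        = (∑ p ∈ T, (∑ j ∈ Finset.univ.filter (fun j => pair j = p), θ.1 j)
              * gaussDensity x p.1 p.2)
          - ∑ p ∈ T, (∑ j ∈ Finset.univ.filter (fun j => pair₀ j = p), θ₀.1 j)
              * gaussDensity x p.1 p.2 := by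
      rw [← Finset.sum_sub_distrib]
      refine Finset.sum_congr rfl fun p _ => ?_
      rw [hc]
      ring
    rw [e, hgroup θ.1 pair hmaps x, hgroup θ₀.1 pair₀ hmaps₀ x]
    have h1 : mixDensity k θ x = ∑ j, θ.1 j * gaussDensity x (pair j).1 (pair j).2 := rfl
    have h2 : mixDensity k θ₀ x = ∑ j, θ₀.1 j * gaussDensity x (pair₀ j).1 (pair₀ j).2 := rfl
    rw [← h1, ← h2, heq x, sub_self]
  have hTσ : ∀ p ∈ T, 0 < p.2 := by
    intro p hp
    rcases Finset.mem_union.1 hp with hp1 | hp2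
    · obtain ⟨j, _, rfl⟩ := Finset.mem_image.1 hp1
      exact hσθ j
    · obtain ⟨j, _, rfl⟩ := Finset.mem_image.1 hp2
      exact hσ₀ j
  have hcz : ∀ p ∈ T, c p = 0 := gauss_lin_indep T hTσ c hzero
  have hfib₀ : ∀ j : Fin k, Finset.univ.filter (fun i => pair₀ i = pair₀ j) = {j} := by
    intro j
    ext i
    simp only [Finset.mem_filter, Finset.mem_univ, true_and, Finset.mem_singleton]
    exact ⟨fun h => hdist₀ h, fun h => by rw [h]⟩
  have hex : ∀ j : Fin k, ∃ i : Fin k, pair i = pair₀ j := by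
    intro j
    have hcj := hcz (pair₀ j) (hmaps₀ j (Finset.mem_univ j))
    rw [hc] at hcj
    have h0 : ∑ i ∈ Finset.univ.filter (fun i => pair₀ i = pair₀ j), θ₀.1 i = θ₀.1 j := by
      rw [hfib₀ j, Finset.sum_singleton]
    have hsum : ∑ i ∈ Finset.univ.filter (fun i => pair i = pair₀ j), θ.1 i = θ₀.1 j := by
      simp only at hcj
      linarith [hcj, h0]
    by_contra hno
    push_neg at hno
    have hemp : Finset.univ.filter (fun i => pair i = pair₀ j) = ∅ :=
      Finset.filter_eq_empty_iff.2 fun i _ => hno i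
    rw [hemp, Finset.sum_empty] at hsum
    exact absurd hsum.symm (ne_of_gt (hw₀ j))
  choose g hg using hex
  have hginj : Function.Injective g := by
    intro j1 j2 h12
    apply hdist₀
    show pair₀ j1 = pair₀ j2
    rw [← hg j1, ← hg j2, h12]
  have hgbij : Function.Bijective g := (Finite.injective_iff_bijective).1 hginj
  set τ : Equiv.Perm (Fin k) := Equiv.ofBijective g hgbij with hτ
  refine ⟨τ, fun j => ?_⟩
  have hτj : τ j = g j := rfl
  have hpe : pair (τ j) = pair₀ j := by rw [hτj]; exact hg j
  have hμσ : θ.2.1 (τ j) = θ₀.2.1 j ∧ θ.2.2 (τ j) = θ₀.2.2 j :=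
    ⟨congrArg Prod.fst hpe, congrArg Prod.snd hpe⟩
  refine ⟨?_, hμσ.1, hμσ.2⟩
  have hfib : Finset.univ.filter (fun i => pair i = pair₀ j) = {τ j} := by
    ext i
    simp only [Finset.mem_filter, Finset.mem_univ, true_and, Finset.mem_singleton]
    constructor
    · intro hi
      obtain ⟨j', rfl⟩ := τ.surjective i
      have hjj : pair₀ j' = pair₀ j := by
        rw [← hg j']
        exact hi
      rw [hdist₀ hjj]
    · intro hi
      rw [hi]
      exact hpe
  have hcj := hcz (pair₀ j) (hmaps₀ j (Finset.mem_univ j))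
  rw [hc] at hcj
  simp only at hcj
  have h0 : ∑ i ∈ Finset.univ.filter (fun i => pair₀ i = pair₀ j), θ₀.1 i = θ₀.1 j := by
    rw [hfib₀ j, Finset.sum_singleton]
  have h1 : ∑ i ∈ Finset.univ.filter (fun i => pair i = pair₀ j), θ.1 i = θ.1 (τ j) := by
    rw [hfib, Finset.sum_singleton]
  linarith [hcj, h0, h1]


lemma sieve_w_le_one {θ : MixParam k} (h0 : ∀ j, 0 ≤ θ.1 j) (h1 : ∑ j, θ.1 j = 1) (j : Fin k) :
    θ.1 j ≤ 1 := by
  have h := Finset.single_le_sum (f := θ.1) (fun i _ => h0 i) (Finset.mem_univ j)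
  rwa [h1] at h

lemma sieve_σ_pos {m ε : ℝ} {θ : MixParam k} (hθ : memSieve k m ε θ) (j : Fin k) :
    0 < θ.2.2 j :=
  lt_of_lt_of_le (Real.exp_pos (-m)) ((hθ.2.2 j).2.2.1)

lemma dMin_le_val (θ θ' : MixParam k) (τ : Equiv.Perm (Fin k)) :
    dMin k θ θ' ≤ Real.sqrt (∑ j, (θ.2.1 (τ j) - θ'.2.1 j) ^ 2)
      + Real.sqrt (∑ j, (θ.2.2 (τ j) - θ'.2.2 j) ^ 2)
      + ∑ j, |θ.1 (τ j) - θ'.1 j| :=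
  ciInf_le (Set.Finite.bddBelow (Set.finite_range _)) τ

lemma le_dMin (θ θ' : MixParam k) {c : ℝ}
    (h : ∀ τ : Equiv.Perm (Fin k), c ≤ Real.sqrt (∑ j, (θ.2.1 (τ j) - θ'.2.1 j) ^ 2)
      + Real.sqrt (∑ j, (θ.2.2 (τ j) - θ'.2.2 j) ^ 2)
      + ∑ j, |θ.1 (τ j) - θ'.1 j|) : c ≤ dMin k θ θ' := by
  unfold dMin
  exact le_ciInf h

/-- Integrability of `log f_θ · f_θ₀` on the sieve. -/
lemma integrable_log_mix_mul {m ε : ℝ} (hk : 0 < k) (hm : 1 ≤ m) (hε : 0 < ε)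
    (θ θ₀ : MixParam k) (hθ : memSieve k m ε θ) (hθ₀ : memSieve k m ε θ₀) :
    Integrable (fun x => Real.log (mixDensity k θ x) * mixDensity k θ₀ x) := by
  have hσ := sieve_σ_pos hθ
  have hσ₀ := sieve_σ_pos hθ₀
  set s : ℝ := Real.exp (-m) with hsdef
  set S : ℝ := Real.exp m with hSdef
  have hspos : 0 < s := Real.exp_pos _
  have hsS : s ≤ S := Real.exp_le_exp.2 (by linarith)
  set A : ℝ := |Real.log (2 * k * ((Real.sqrt (2 * Real.pi))⁻¹ * s⁻¹))|
      + |Real.log (ε * ((Real.sqrt (2 * Real.pi))⁻¹ * S⁻¹))| + m^2/s^2 with hA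
  set B : ℝ := 1/s^2 with hB
  apply Integrable.mono' (integrable_quad_mul_mix θ₀ hσ₀ A B)
  · exact ((Real.measurable_log.comp (mix_cont θ).measurable).mul
      (mix_cont θ₀).measurable).aestronglyMeasurable
  · refine ae_of_all _ fun x => ?_
    have hb := abs_log_mix_le (θ := θ) hk hε hspos hsS (by linarith : (0:ℝ) ≤ m)
      (fun j => ⟨(hθ.2.2 j).1, le_trans (sieve_w_le_one hθ.1 hθ.2.1 j) one_le_two⟩)
      (fun j => (hθ.2.2 j).2.1)
      (fun j => ⟨(hθ.2.2 j).2.2.1, (hθ.2.2 j).2.2.2⟩) x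
    have hnn : 0 ≤ mixDensity k θ₀ x := mix_nonneg hθ₀.1 hσ₀ x
    rw [Real.norm_eq_abs, abs_mul, abs_of_nonneg hnn]
    calc |Real.log (mixDensity k θ x)| * mixDensity k θ₀ x
        ≤ (A + B * x^2) * mixDensity k θ₀ x := by
          apply mul_le_mul_of_nonneg_right _ hnn
          calc |Real.log (mixDensity k θ x)| ≤ (|Real.log (2 * k * ((Real.sqrt (2 * Real.pi))⁻¹ * s⁻¹))|
              + |Real.log (ε * ((Real.sqrt (2 * Real.pi))⁻¹ * S⁻¹))| + m^2/s^2) + (1/s^2) * x^2 := hb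
          _ = A + B * x^2 := by rw [hA, hB]
    _ = (A + B * x^2) * mixDensity k θ₀ x := rfl

/-- Gibbs inequality specialized to sieve mixtures. -/
lemma gibbs_mix {m ε : ℝ} (hk : 0 < k) (hm : 1 ≤ m) (hε : 0 < ε)
    (θ₀ θ : MixParam k) (hθ₀ : memSieve k m ε θ₀) (hθ : memSieve k m ε θ) :
    popLogLik k θ₀ θ ≤ popLogLik k θ₀ θ₀ ∧
      (popLogLik k θ₀ θ = popLogLik k θ₀ θ₀ →
        ∀ x, mixDensity k θ x = mixDensity k θ₀ x) := by
  have hσ := sieve_σ_pos hθ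
  have hσ₀ := sieve_σ_pos hθ₀
  have hwp : ∀ j, 0 < θ.1 j := fun j => lt_of_lt_of_le hε (hθ.2.2 j).1
  have hwp₀ : ∀ j, 0 < θ₀.1 j := fun j => lt_of_lt_of_le hε (hθ₀.2.2 j).1
  have h := gibbs (fun x => mixDensity k θ₀ x) (fun x => mixDensity k θ x)
    (mix_cont θ₀) (mix_cont θ)
    (mix_pos hk hwp₀ hσ₀) (mix_pos hk hwp hσ)
    (mix_integrable θ₀ hσ₀) (mix_integrable θ hσ)
    (mix_integral θ₀ hσ₀ hθ₀.2.1) (mix_integral θ hσ hθ.2.1)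
    (integrable_log_mix_mul hk hm hε θ₀ θ₀ hθ₀ hθ₀)
    (integrable_log_mix_mul hk hm hε θ θ₀ hθ hθ₀)
  refine ⟨h.1, fun heq x => ?_⟩
  have := h.2 heq
  exact congrFun this x

/-- Continuity of the population log-likelihood on the sieve. -/
lemma popLogLik_contAt {m ε : ℝ} (hk : 0 < k) (hm : 1 ≤ m) (hε : 0 < ε)
    (θ₀ : MixParam k) (hθ₀ : memSieve k m ε θ₀)
    (θs : MixParam k) (hθs : memSieve k m ε θs) :
    ContinuousAt (popLogLik k θ₀) θs := by
  have cw : ∀ j : Fin k, Continuous fun θ : MixParam k => θ.1 j :=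
    fun j => (continuous_apply j).comp continuous_fst
  have cμ : ∀ j : Fin k, Continuous fun θ : MixParam k => θ.2.1 j :=
    fun j => (continuous_apply j).comp (continuous_fst.comp continuous_snd)
  have cσ : ∀ j : Fin k, Continuous fun θ : MixParam k => θ.2.2 j :=
    fun j => (continuous_apply j).comp (continuous_snd.comp continuous_snd)
  have hσ₀ := sieve_σ_pos hθ₀
  have hσs := sieve_σ_pos hθs
  have hws : ∀ j, 0 < θs.1 j := fun j => lt_of_lt_of_le hε (hθs.2.2 j).1
  set s : ℝ := Real.exp (-m) / 2 with hsdef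
  set S : ℝ := Real.exp m + 1 with hSdef
  have hspos : 0 < s := by rw [hsdef]; positivity
  have hsS : s ≤ S := by
    rw [hsdef, hSdef]
    have h1 : Real.exp (-m) ≤ Real.exp m := Real.exp_le_exp.2 (by linarith)
    have h2 : 0 < Real.exp (-m) := Real.exp_pos _
    linarith
  set A : ℝ := |Real.log (2 * k * ((Real.sqrt (2 * Real.pi))⁻¹ * s⁻¹))|
      + |Real.log ((ε/2) * ((Real.sqrt (2 * Real.pi))⁻¹ * S⁻¹))| + (m+1)^2/s^2 with hA
  set B : ℝ := 1/s^2 with hB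
  have hev : ∀ᶠ θ : MixParam k in 𝓝 θs, ∀ j : Fin k,
      (ε/2 < θ.1 j ∧ θ.1 j < 2) ∧ |θ.2.1 j| < m + 1 ∧ (s < θ.2.2 j ∧ θ.2.2 j < S) := by
    rw [Filter.eventually_all]
    intro j
    have e1 : ∀ᶠ θ : MixParam k in 𝓝 θs, ε/2 < θ.1 j :=
      ContinuousAt.eventually_lt continuousAt_const (cw j).continuousAt
        (lt_of_lt_of_le (by linarith) (hθs.2.2 j).1)
    have e2 : ∀ᶠ θ : MixParam k in 𝓝 θs, θ.1 j < 2 :=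
      ContinuousAt.eventually_lt (cw j).continuousAt continuousAt_const
        (lt_of_le_of_lt (sieve_w_le_one hθs.1 hθs.2.1 j) one_lt_two)
    have e3 : ∀ᶠ θ : MixParam k in 𝓝 θs, |θ.2.1 j| < m + 1 :=
      ContinuousAt.eventually_lt (continuous_abs.comp (cμ j)).continuousAt continuousAt_const
        (lt_of_le_of_lt (hθs.2.2 j).2.1 (by linarith))
    have e4 : ∀ᶠ θ : MixParam k in 𝓝 θs, s < θ.2.2 j :=
      ContinuousAt.eventually_lt continuousAt_const (cσ j).continuousAt
        (lt_of_lt_of_le (by rw [hsdef]; exact half_lt_self (Real.exp_pos _)) (hθs.2.2 j).2.2.1)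
    have e5 : ∀ᶠ θ : MixParam k in 𝓝 θs, θ.2.2 j < S :=
      ContinuousAt.eventually_lt (cσ j).continuousAt continuousAt_const
        (lt_of_le_of_lt (hθs.2.2 j).2.2.2 (by rw [hSdef]; linarith))
    exact ((e1.and e2).and (e3.and (e4.and e5)))
  have hcont : ContinuousAt (fun θ : MixParam k =>
      ∫ x : ℝ, Real.log (mixDensity k θ x) * mixDensity k θ₀ x) θs := by
    apply continuousAt_of_dominated (bound := fun x => (A + B * x^2) * mixDensity k θ₀ x)
    · exact Filter.Eventually.of_forall fun θ =>
        ((Real.measurable_log.comp (mix_cont θ).measurable).mul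
          (mix_cont θ₀).measurable).aestronglyMeasurable
    · refine hev.mono fun θ hθ => ae_of_all _ fun x => ?_
      have hb := abs_log_mix_le (θ := θ) hk (by linarith : (0:ℝ) < ε/2) hspos hsS
        (by linarith : (0:ℝ) ≤ m + 1)
        (fun j => ⟨((hθ j).1.1).le, ((hθ j).1.2).le⟩)
        (fun j => ((hθ j).2.1).le)
        (fun j => ⟨((hθ j).2.2.1).le, ((hθ j).2.2.2).le⟩) x
      have hnn : 0 ≤ mixDensity k θ₀ x := mix_nonneg hθ₀.1 hσ₀ x
      rw [Real.norm_eq_abs, abs_mul, abs_of_nonneg hnn]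
      apply mul_le_mul_of_nonneg_right _ hnn
      calc |Real.log (mixDensity k θ x)|
          ≤ (|Real.log (2 * k * ((Real.sqrt (2 * Real.pi))⁻¹ * s⁻¹))|
            + |Real.log ((ε/2) * ((Real.sqrt (2 * Real.pi))⁻¹ * S⁻¹))| + (m+1)^2/s^2)
            + (1/s^2) * x^2 := hb
      _ = A + B * x^2 := by rw [hA, hB]
    · exact integrable_quad_mul_mix θ₀ hσ₀ A B
    · refine ae_of_all _ fun x => ?_
      have hmix : ContinuousAt (fun θ : MixParam k => mixDensity k θ x) θs := by
        have hterm : ∀ j : Fin k, Tendsto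
            (fun θ : MixParam k => θ.1 j * gaussDensity x (θ.2.1 j) (θ.2.2 j)) (𝓝 θs)
            (𝓝 (θs.1 j * gaussDensity x (θs.2.1 j) (θs.2.2 j))) := by
          intro j
          have hσne : θs.2.2 j ≠ 0 := (hσs j).ne'
          have hden : (2 : ℝ) * (θs.2.2 j)^2 ≠ 0 := by positivity
          have hgd : ContinuousAt
              (fun θ : MixParam k => gaussDensity x (θ.2.1 j) (θ.2.2 j)) θs := by
            simp only [gaussDensity]
            exact (continuousAt_const.mul (((cσ j).continuousAt).inv₀ hσne)).mul
              (Real.continuous_exp.continuousAt.comp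
                (ContinuousAt.div
                  (((continuous_const.sub (cμ j)).pow 2).neg.continuousAt)
                  ((continuous_const.mul ((cσ j).pow 2)).continuousAt) hden))
          exact (cw j).continuousAt.mul hgd
        exact tendsto_finset_sum _ fun j _ => hterm j
      have hpos : 0 < mixDensity k θs x := mix_pos hk hws hσs x
      have hlog : ContinuousAt (fun θ : MixParam k => Real.log (mixDensity k θ x)) θs :=
        ContinuousAt.comp (f := fun θ : MixParam k => mixDensity k θ x) (x := θs)
          (Real.continuousAt_log hpos.ne') hmix
      exact hlog.mul continuousAt_const
  exact hcont


end Aux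

/-- Kullback–Leibler separation on the sieve: if `θ₀ ∈ S_{m,ε}` has positive weights and
pairwise distinct component pairs, then for every `δ > 0` there is `η > 0` such that
`ℓ(θ) ≤ ℓ(θ₀) − η` whenever `θ ∈ S_{m,ε}` and `d_min(θ, θ₀) ≥ δ`. -/
theorem mixture_KL_separation (k : ℕ) (hk : 2 ≤ k) (m ε : ℝ) (hm : 1 ≤ m)
    (hε : 0 < ε) (hεk : ε ≤ 1 / k)
    (θ₀ : MixParam k) (hθ₀ : memSieve k m ε θ₀)
    (hw₀ : ∀ j, 0 < θ₀.1 j)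
    (hdist₀ : Function.Injective (fun j => (θ₀.2.1 j, θ₀.2.2 j))) :
    ∀ δ : ℝ, 0 < δ → ∃ η : ℝ, 0 < η ∧
      ∀ θ : MixParam k, memSieve k m ε θ → δ ≤ dMin k θ θ₀ →
        popLogLik k θ₀ θ ≤ popLogLik k θ₀ θ₀ - η := by
  intro δ hδ
  classical
  have hk0 : 0 < k := lt_of_lt_of_le (by norm_num) hk
  have cw : ∀ j : Fin k, Continuous fun θ : MixParam k => θ.1 j :=
    fun j => (continuous_apply j).comp continuous_fst
  have cμ : ∀ j : Fin k, Continuous fun θ : MixParam k => θ.2.1 j :=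
    fun j => (continuous_apply j).comp (continuous_fst.comp continuous_snd)
  have cσ : ∀ j : Fin k, Continuous fun θ : MixParam k => θ.2.2 j :=
    fun j => (continuous_apply j).comp (continuous_snd.comp continuous_snd)
  set K : Set (MixParam k) := {θ | memSieve k m ε θ ∧ δ ≤ dMin k θ θ₀} with hKdef
  by_cases hKne : K.Nonempty
  · -- closedness of the sieve
    have hsieve_closed : IsClosed {θ : MixParam k | memSieve k m ε θ} := by
      have hset : {θ : MixParam k | memSieve k m ε θ} =
          (⋂ j, {θ : MixParam k | 0 ≤ θ.1 j}) ∩ ({θ : MixParam k | (∑ j, θ.1 j) = 1} ∩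
            ⋂ j, ({θ : MixParam k | ε ≤ θ.1 j} ∩ ({θ : MixParam k | |θ.2.1 j| ≤ m} ∩
              ({θ : MixParam k | Real.exp (-m) ≤ θ.2.2 j}
                ∩ {θ : MixParam k | θ.2.2 j ≤ Real.exp m})))) := by
        ext θ
        simp only [memSieve, Set.mem_inter_iff, Set.mem_iInter, Set.mem_setOf_eq]
      rw [hset]
      refine (isClosed_iInter fun j => isClosed_le continuous_const (cw j)).inter
        (IsClosed.inter ?_ (isClosed_iInter fun j => ?_))
      · exact isClosed_eq (continuous_finset_sum _ fun j _ => cw j) continuous_const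
      · exact (isClosed_le continuous_const (cw j)).inter
          ((isClosed_le (continuous_abs.comp (cμ j)) continuous_const).inter
            ((isClosed_le continuous_const (cσ j)).inter
              (isClosed_le (cσ j) continuous_const)))
    have hdmin_closed : IsClosed {θ : MixParam k | δ ≤ dMin k θ θ₀} := by
      have hset : {θ : MixParam k | δ ≤ dMin k θ θ₀} =
          ⋂ τ : Equiv.Perm (Fin k), {θ : MixParam k |
            δ ≤ Real.sqrt (∑ j, (θ.2.1 (τ j) - θ₀.2.1 j) ^ 2)
              + Real.sqrt (∑ j, (θ.2.2 (τ j) - θ₀.2.2 j) ^ 2)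
              + ∑ j, |θ.1 (τ j) - θ₀.1 j|} := by
        ext θ
        simp only [Set.mem_iInter, Set.mem_setOf_eq]
        constructor
        · intro h τ
          exact le_trans h (dMin_le_val θ θ₀ τ)
        · intro h
          exact le_dMin θ θ₀ h
      rw [hset]
      refine isClosed_iInter fun τ => isClosed_le continuous_const ?_
      exact ((Real.continuous_sqrt.comp
          (continuous_finset_sum _ fun j _ => ((cμ (τ j)).sub continuous_const).pow 2)).add
        (Real.continuous_sqrt.comp
          (continuous_finset_sum _ fun j _ => ((cσ (τ j)).sub continuous_const).pow 2))).add
        (continuous_finset_sum _ fun j _ => ((cw (τ j)).sub continuous_const).abs)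
    have hclosed : IsClosed K := by
      have : K = {θ : MixParam k | memSieve k m ε θ} ∩ {θ : MixParam k | δ ≤ dMin k θ θ₀} := rfl
      rw [this]
      exact hsieve_closed.inter hdmin_closed
    -- compactness via a box
    set Box : Set (MixParam k) := (Set.univ.pi fun _ : Fin k => Set.Icc (0:ℝ) 1) ×ˢ
        ((Set.univ.pi fun _ : Fin k => Set.Icc (-m) m) ×ˢ
          (Set.univ.pi fun _ : Fin k => Set.Icc (Real.exp (-m)) (Real.exp m))) with hBox
    have hBoxcomp : IsCompact Box :=
      (isCompact_univ_pi fun _ => isCompact_Icc).prod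
        ((isCompact_univ_pi fun _ => isCompact_Icc).prod
          (isCompact_univ_pi fun _ => isCompact_Icc))
    have hKsub : K ⊆ Box := by
      rintro θ ⟨hs, _⟩
      refine ⟨?_, ?_, ?_⟩
      · exact Set.mem_univ_pi.2 fun j => ⟨hs.1 j, sieve_w_le_one hs.1 hs.2.1 j⟩
      · exact Set.mem_univ_pi.2 fun j => abs_le.1 (hs.2.2 j).2.1
      · exact Set.mem_univ_pi.2 fun j => ⟨(hs.2.2 j).2.2.1, (hs.2.2 j).2.2.2⟩
    have hKcomp : IsCompact K := hBoxcomp.of_isClosed_subset hclosed hKsub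
    have hcont : ContinuousOn (popLogLik k θ₀) K := fun θ hθ =>
      (popLogLik_contAt hk0 hm hε θ₀ hθ₀ θ hθ.1).continuousWithinAt
    obtain ⟨θm, hθmK, hmax⟩ := hKcomp.exists_isMaxOn hKne hcont
    set η : ℝ := popLogLik k θ₀ θ₀ - popLogLik k θ₀ θm with hη
    have hle := (gibbs_mix hk0 hm hε θ₀ θm hθ₀ hθmK.1).1
    have hηpos : 0 < η := by
      rcases lt_or_eq_of_le hle with h | h
      · rw [hη]
        linarith
      · exfalso
        have heqmix := (gibbs_mix hk0 hm hε θ₀ θm hθ₀ hθmK.1).2 h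
        obtain ⟨τ, hτ⟩ := mix_ident θm θ₀ (sieve_σ_pos hθmK.1) hw₀ (sieve_σ_pos hθ₀)
          hdist₀ heqmix
        have hd0 : dMin k θm θ₀ ≤ 0 := by
          have hv := dMin_le_val θm θ₀ τ
          have e1 : ∑ j, (θm.2.1 (τ j) - θ₀.2.1 j)^2 = 0 :=
            Finset.sum_eq_zero fun j _ => by rw [(hτ j).2.1]; ring
          have e2 : ∑ j, (θm.2.2 (τ j) - θ₀.2.2 j)^2 = 0 :=
            Finset.sum_eq_zero fun j _ => by rw [(hτ j).2.2]; ring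
          have e3 : ∑ j, |θm.1 (τ j) - θ₀.1 j| = 0 :=
            Finset.sum_eq_zero fun j _ => by rw [(hτ j).1]; simp
          rw [e1, e2, e3, Real.sqrt_zero] at hv
          simpa using hv
        have := hθmK.2
        linarith
    refine ⟨η, hηpos, fun θ hθ hd => ?_⟩
    have hmem : θ ∈ K := ⟨hθ, hd⟩
    have hmx := hmax hmem
    rw [hη]
    simp only [Set.mem_setOf_eq] at hmx
    linarith
  · refine ⟨1, one_pos, fun θ hθ hd => ?_⟩
    exact absurd ⟨θ, ⟨hθ, hd⟩⟩ hKne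
end
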